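/- arXiv:2007.11853 — 4 statements merged into one kernel-verified Lean document; each statement's English description precedes it below -/
import Mathlib

section
/- Let G be a graph, w a weight assignment, ρ a cost assignment, and t ≥ 1 an integer, and suppose G is a (w,ρ,t)-expander. If X₁, X₂ ⊆ V(G) satisfy ρ(X₁) ≥ ρ(G)/b₁ and ρ(X₂) ≥ ρ(G)/b₂ for integers b₁,b₂ ≥ 1, then the graph distance between X₁ and X₂ in G is at most ℓ(t,b₁) + ℓ(t,b₂). -/
open Finset

/-- `ell t b` is the least integer `ℓ` with `(1 + 1/t)^ℓ > b`. -/
noncomputable def ell (t b : ℕ) : ℕ := sInf {ℓ : ℕ | (b : ℝ) < (1 + 1 / (t : ℝ)) ^ ℓ}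

/-- The neighborhood of a vertex set: vertices outside `X` with a neighbor in `X`. -/
def nbhd {V : Type*} [Fintype V] [DecidableEq V] (G : SimpleGraph V)
    [DecidableRel G.Adj] (X : Finset V) : Finset V :=
  Finset.univ.filter (fun v => v ∉ X ∧ ∃ u ∈ X, G.Adj u v)

/-- `G` is a `(w, ρ, t)`-expander. -/
def IsExpander {V : Type*} [Fintype V] [DecidableEq V] (G : SimpleGraph V)
    [DecidableRel G.Adj] (w ρ : V → ℝ) (t : ℕ) : Prop :=
  (∑ v, ρ v) ≠ 0 ∧
    ∀ X : Finset V, (∑ v ∈ X, w v) ≤ (∑ v, w v) / 2 →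
      (∑ v ∈ X, ρ v) / t ≤ ∑ v ∈ nbhd G X, ρ v

/-!
Grow balls around `X₁` and `X₂` one neighbourhood at a time. While a ball has at most half of
the total weight, the expansion property multiplies its cost by at least `1 + 1/t`; starting from
cost `ρ(G)/b`, the cost would exceed `ρ(G)` after `ℓ(t, b)` steps. Hence the ball of radius
`ℓ(t, bᵢ)` around `Xᵢ` (or a smaller one) carries more than half of the weight, so the two balls
meet, and a common vertex links `X₁` to `X₂` by a walk of length at most `ℓ(t, b₁) + ℓ(t, b₂)`.
-/

lemma lt_one_add_inv_pow_ell {t : ℕ} (ht : 1 ≤ t) (b : ℕ) :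
    (b : ℝ) < (1 + 1 / (t : ℝ)) ^ ell t b := by
  have h_one_lt : (1 : ℝ) < 1 + 1 / t := by
    have : (0 : ℝ) < 1 / t := by positivity
    linarith
  exact Nat.sInf_mem (pow_unbounded_of_one_lt _ h_one_lt)

lemma Finset.inter_nonempty_of_sum_add_sum_gt {α M : Type*} [Fintype α] [DecidableEq α]
    [AddCommMonoid M] [LinearOrder M] [IsOrderedAddMonoid M] {w : α → M} (hw : ∀ a, 0 ≤ w a)
    {A B : Finset α} (h : ∑ a, w a < ∑ a ∈ A, w a + ∑ a ∈ B, w a) : (A ∩ B).Nonempty := by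
  rw [← Finset.not_disjoint_iff_nonempty_inter]
  intro hAB
  rw [← Finset.sum_union hAB] at h
  exact h.not_ge (Finset.sum_le_sum_of_subset_of_nonneg (Finset.subset_univ _) fun a _ _ => hw a)

section Ball

variable {V : Type*} [Fintype V] [DecidableEq V] (G : SimpleGraph V) [DecidableRel G.Adj]

lemma disjoint_nbhd (X : Finset V) : Disjoint X (nbhd G X) := by
  rw [Finset.disjoint_right]
  intro v hv
  exact (Finset.mem_filter.1 hv).2.1

def ball (X : Finset V) : ℕ → Finset V
  | 0 => X
  | i + 1 => ball X i ∪ nbhd G (ball X i)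

lemma exists_walk_of_mem_ball (X : Finset V) :
    ∀ i, ∀ v ∈ ball G X i, ∃ x ∈ X, ∃ p : G.Walk x v, p.length ≤ i
  | 0, v, hv => ⟨v, hv, .nil, le_rfl⟩
  | i + 1, v, hv => by
    rcases Finset.mem_union.1 hv with h_old | h_new
    · obtain ⟨x, hx, p, hp⟩ := exists_walk_of_mem_ball X i v h_old
      exact ⟨x, hx, p, hp.trans i.le_succ⟩
    · obtain ⟨-, -, u, hu, huv⟩ := Finset.mem_filter.1 h_new
      obtain ⟨x, hx, p, hp⟩ := exists_walk_of_mem_ball X i u hu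
      exact ⟨x, hx, p.concat huv, by simpa using hp⟩

lemma exists_reachable_dist_le_of_mem_ball_inter {X Y : Finset V} {i j : ℕ} {z : V}
    (hz : z ∈ ball G X i ∩ ball G Y j) :
    ∃ x ∈ X, ∃ y ∈ Y, G.Reachable x y ∧ G.dist x y ≤ i + j := by
  obtain ⟨x, hx, p, hp⟩ := exists_walk_of_mem_ball G X i z (Finset.mem_inter.1 hz).1
  obtain ⟨y, hy, q, hq⟩ := exists_walk_of_mem_ball G Y j z (Finset.mem_inter.1 hz).2
  refine ⟨x, hx, y, hy, (p.append q.reverse).reachable, ?_⟩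
  calc G.dist x y ≤ (p.append q.reverse).length := SimpleGraph.dist_le _
    _ = p.length + q.length := by simp
    _ ≤ i + j := Nat.add_le_add hp hq

variable {G} {w ρ : V → ℝ} {t : ℕ}

lemma IsExpander.one_add_inv_mul_sum_ball_le (hexp : IsExpander G w ρ t) (X : Finset V) (i : ℕ)
    (hsmall : ∑ v ∈ ball G X i, w v ≤ (∑ v, w v) / 2) :
    (1 + 1 / (t : ℝ)) * ∑ v ∈ ball G X i, ρ v ≤ ∑ v ∈ ball G X (i + 1), ρ v := by
  have h_expand := hexp.2 _ hsmall
  rw [ball, Finset.sum_union (disjoint_nbhd G _)]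
  linarith [show (1 + 1 / (t : ℝ)) * ∑ v ∈ ball G X i, ρ v
      = ∑ v ∈ ball G X i, ρ v + (∑ v ∈ ball G X i, ρ v) / t by ring]

lemma IsExpander.one_add_inv_pow_mul_sum_le_sum_ball (hexp : IsExpander G w ρ t)
    (X : Finset V) (i : ℕ) (hsmall : ∀ j < i, ∑ v ∈ ball G X j, w v ≤ (∑ v, w v) / 2) :
    (1 + 1 / (t : ℝ)) ^ i * ∑ v ∈ X, ρ v ≤ ∑ v ∈ ball G X i, ρ v := by
  induction i with
  | zero => simp [ball]
  | succ i ih =>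
    calc (1 + 1 / (t : ℝ)) ^ (i + 1) * ∑ v ∈ X, ρ v
        = (1 + 1 / (t : ℝ)) * ((1 + 1 / (t : ℝ)) ^ i * ∑ v ∈ X, ρ v) := by ring
      _ ≤ (1 + 1 / (t : ℝ)) * ∑ v ∈ ball G X i, ρ v := by
        gcongr
        exact ih fun j hj => hsmall j (hj.trans i.lt_succ_self)
      _ ≤ ∑ v ∈ ball G X (i + 1), ρ v :=
        hexp.one_add_inv_mul_sum_ball_le X i (hsmall i i.lt_succ_self)

lemma IsExpander.exists_le_ell_half_lt_sum_ball (hexp : IsExpander G w ρ t) (hρ : ∀ v, 0 ≤ ρ v)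
    (ht : 1 ≤ t) {b : ℕ} (hb : 1 ≤ b) {X : Finset V} (hX : (∑ v, ρ v) / b ≤ ∑ v ∈ X, ρ v) :
    ∃ i ≤ ell t b, (∑ v, w v) / 2 < ∑ v ∈ ball G X i, w v := by
  by_contra! h_small
  have hρ_pos : 0 < ∑ v, ρ v :=
    (Finset.sum_nonneg fun v _ => hρ v).lt_of_ne (Ne.symm hexp.1)
  have hb_pos : (0 : ℝ) < b := by exact_mod_cast hb
  have h_grow := hexp.one_add_inv_pow_mul_sum_le_sum_ball X (ell t b)
    fun j hj => h_small j hj.le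
  have h_ball_le : ∑ v ∈ ball G X (ell t b), ρ v ≤ ∑ v, ρ v :=
    Finset.sum_le_sum_of_subset_of_nonneg (Finset.subset_univ _) fun v _ _ => hρ v
  have : ∑ v, ρ v < ∑ v, ρ v :=
    calc ∑ v, ρ v = b * ((∑ v, ρ v) / b) := by field_simp
      _ < (1 + 1 / (t : ℝ)) ^ ell t b * ((∑ v, ρ v) / b) := by
        gcongr
        exact lt_one_add_inv_pow_ell ht b
      _ ≤ (1 + 1 / (t : ℝ)) ^ ell t b * ∑ v ∈ X, ρ v := by gcongr
      _ ≤ ∑ v, ρ v := h_grow.trans h_ball_le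
  exact this.false

end Ball

theorem expander_dist {V : Type*} [Fintype V] [DecidableEq V] (G : SimpleGraph V)
    [DecidableRel G.Adj] (w ρ : V → ℝ) (hw : ∀ v, 0 ≤ w v) (hρ : ∀ v, 0 ≤ ρ v)
    (t b₁ b₂ : ℕ) (ht : 1 ≤ t) (hb₁ : 1 ≤ b₁) (hb₂ : 1 ≤ b₂)
    (hexp : IsExpander G w ρ t) (X₁ X₂ : Finset V)
    (h₁ : (∑ v, ρ v) / b₁ ≤ ∑ v ∈ X₁, ρ v)
    (h₂ : (∑ v, ρ v) / b₂ ≤ ∑ v ∈ X₂, ρ v) :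
    ∃ x ∈ X₁, ∃ y ∈ X₂, G.Reachable x y ∧ G.dist x y ≤ ell t b₁ + ell t b₂ := by
  obtain ⟨i₁, hi₁, hw₁⟩ := hexp.exists_le_ell_half_lt_sum_ball hρ ht hb₁ h₁
  obtain ⟨i₂, hi₂, hw₂⟩ := hexp.exists_le_ell_half_lt_sum_ball hρ ht hb₂ h₂
  obtain ⟨z, hz⟩ := Finset.inter_nonempty_of_sum_add_sum_gt hw (by linarith : ∑ v, w v <
    ∑ v ∈ ball G X₁ i₁, w v + ∑ v ∈ ball G X₂ i₂, w v)
  obtain ⟨x, hx, y, hy, hxy, hdist⟩ := exists_reachable_dist_le_of_mem_ball_inter G hz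
  exact ⟨x, hx, y, hy, hxy, hdist.trans (Nat.add_le_add hi₁ hi₂)⟩
end

section
/- Let G be a graph, ≺ a linear ordering of V(G), m ≥ 1 an integer, and X ⊆ V(G). Let C be a set of vertices of G^{[≺,m]/X}. If x, y ∈ X lie in different connected components of G^{[≺,m]/X} − C, then d_{G−C}(x,y) > m. -/
/-- The set of vertices `(≺, m)`-reachable from `v`: endpoints `u` of paths from `v`
of length at most `m` all of whose vertices are `≥ u`. -/
def reachSet {V : Type*} [LinearOrder V] (G : SimpleGraph V) (m : ℕ) (v : V) : Set V :=
  {u | ∃ p : G.Walk v u, p.IsPath ∧ p.length ≤ m ∧ ∀ x ∈ p.support, u ≤ x}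

/-- The graph `G^{[≺,m]}` on `V(G)`, with an edge `uv` whenever `u ∈ L^≺_m(v)`. -/
def wreach {V : Type*} [LinearOrder V] (G : SimpleGraph V) (m : ℕ) : SimpleGraph V where
  Adj u v := u ≠ v ∧ (u ∈ reachSet G m v ∨ v ∈ reachSet G m u)
  symm := ⟨fun u v h => ⟨h.1.symm, h.2.symm⟩⟩
  loopless := ⟨fun v h => h.1 rfl⟩

/-- The restriction of a graph to a set of vertices (keeping the ambient vertex type,
with all edges meeting the complement removed). -/
def restrictTo {V : Type*} (G : SimpleGraph V) (S : Set V) : SimpleGraph V where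
  Adj u v := G.Adj u v ∧ u ∈ S ∧ v ∈ S
  symm := ⟨fun u v h => ⟨h.1.symm, h.2.2, h.2.1⟩⟩
  loopless := ⟨fun v h => G.loopless.irrefl v h.1⟩

/-! If `d_{G-C}(x,y) ≤ m`, the `≺`-minimum `u` of a short `x`–`y` walk avoiding `C` lies in both
`L_m(x)` and `L_m(y)`, and it is not in `C`; so `x – u – y` is a walk in `G^{[≺,m]/X} - C`. -/

open SimpleGraph

lemma SimpleGraph.Walk.exists_min_mem_support {V : Type*} [LinearOrder V] {G : SimpleGraph V}
    {a b : V} (q : G.Walk a b) : ∃ u ∈ q.support, ∀ z ∈ q.support, u ≤ z := by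
  obtain ⟨u, hu, hmin⟩ := q.support.toFinset.exists_min_image id ⟨a, by simp⟩
  exact ⟨u, by simpa using hu, fun z hz => hmin z (by simpa using hz)⟩

section
variable {V : Type*} [LinearOrder V] (G : SimpleGraph V) (m : ℕ)

lemma mem_reachSet_self (v : V) : v ∈ reachSet G m v :=
  ⟨.nil, by simp, by simp, by simp⟩

lemma mem_reachSet_of_walk {a b u : V} (q : G.Walk a b) (hlen : q.length ≤ m)
    (hu : u ∈ q.support) (hmin : ∀ z ∈ q.support, u ≤ z) : u ∈ reachSet G m a :=
  ⟨(q.takeUntil u hu).bypass, Walk.bypass_isPath _,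
    (Walk.length_bypass_le_length _).trans ((q.length_takeUntil_le_length hu).trans hlen),
    fun _ hz => hmin _
      (q.support_takeUntil_subset_support hu (Walk.support_bypass_subset_support _ hz))⟩

lemma reachable_restrictTo_wreach_of_mem_reachSet {S : Set V} {u v : V}
    (huv : u ∈ reachSet G m v) (hu : u ∈ S) (hv : v ∈ S) :
    (restrictTo (wreach G m) S).Reachable v u := by
  obtain rfl | hne := eq_or_ne u v
  · rfl
  · exact Adj.reachable ⟨⟨hne.symm, Or.inr huv⟩, hv, hu⟩

end

theorem sep_distance_general {V : Type*} [LinearOrder V] (G : SimpleGraph V) (m : ℕ)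
    (X C : Set V)
    (x y : V) (hx : x ∈ X) (hy : y ∈ X) (hxC : x ∉ C) (hyC : y ∉ C)
    (hsep : ¬ (restrictTo (wreach G m) ((⋃ x ∈ X, reachSet G m x) \ C)).Reachable x y) :
    ∀ p : G.Walk x y, (∀ z ∈ p.support, z ∉ C) → m < p.length := by
  intro p hpC
  by_contra! hle
  obtain ⟨u, hu, hmin⟩ := p.exists_min_mem_support
  have hux : u ∈ reachSet G m x := mem_reachSet_of_walk G m p hle hu hmin
  have huy : u ∈ reachSet G m y :=
    mem_reachSet_of_walk G m p.reverse (by simpa) (by simpa) (by simpa using hmin)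
  set S := (⋃ x ∈ X, reachSet G m x) \ C
  have hxS : x ∈ S := ⟨Set.mem_biUnion hx (mem_reachSet_self G m x), hxC⟩
  have hyS : y ∈ S := ⟨Set.mem_biUnion hy (mem_reachSet_self G m y), hyC⟩
  have huS : u ∈ S := ⟨Set.mem_biUnion hx hux, hpC u hu⟩
  exact hsep ((reachable_restrictTo_wreach_of_mem_reachSet G m hux huS hxS).trans
    (reachable_restrictTo_wreach_of_mem_reachSet G m huy huS hyS).symm)

theorem sep_distance {V : Type*} [LinearOrder V] (G : SimpleGraph V) (m : ℕ)
    (hm : 1 ≤ m) (X C : Set V) (hC : C ⊆ ⋃ x ∈ X, reachSet G m x)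
    (x y : V) (hx : x ∈ X) (hy : y ∈ X) (hxC : x ∉ C) (hyC : y ∉ C)
    (hsep : ¬ (restrictTo (wreach G m) ((⋃ x ∈ X, reachSet G m x) \ C)).Reachable x y) :
    ∀ p : G.Walk x y, (∀ z ∈ p.support, z ∉ C) → m < p.length :=
  sep_distance_general G m X C x y hx hy hxC hyC hsep
end

section
/- For every graph G, linear ordering ≺ of its vertices, integer m ≥ 1, and vertex u, the set R^≺_m(u) = {v ∈ V(G) : u ∈ L^≺_m(v)} induces a connected subgraph of G of radius at most m (with center u). -/
/-- `RSet G m u` is the set of vertices `v` such that `u ∈ L^≺_m(v)`. -/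
def RSet {V : Type*} [LinearOrder V] (G : SimpleGraph V) (m : ℕ) (u : V) : Set V :=
  {v | u ∈ reachSet G m v}

/-! A witness path `v ⤳ u` for `u ∈ L_m(v)` stays inside `R_m(u)`: its tail from any of its
vertices `x` witnesses `u ∈ L_m(x)`. Lifted to `G[R_m(u)]` and reversed, these paths join `u`
to every vertex of `R_m(u)` within distance `m`. -/

namespace SimpleGraph

lemma Walk.length_induce {V : Type*} {G : SimpleGraph V} {s : Set V} {u v : V}
    (p : G.Walk u v) (hp : ∀ x ∈ p.support, x ∈ s) : (p.induce s hp).length = p.length :=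
  ((p.induce s hp).length_map _).symm.trans (congrArg Walk.length (p.map_induce hp))

end SimpleGraph

section

variable {V : Type*} [LinearOrder V] {G : SimpleGraph V} {m : ℕ}

lemma mem_reachSet_of_mem_support {u v x : V} {p : G.Walk v u} (hp : p.IsPath)
    (hlen : p.length ≤ m) (hmin : ∀ y ∈ p.support, u ≤ y) (hx : x ∈ p.support) :
    u ∈ reachSet G m x :=
  ⟨p.dropUntil x hx, hp.dropUntil hx, (p.length_dropUntil_le_length hx).trans hlen,
    fun y hy => hmin y (p.support_dropUntil_subset_support hx hy)⟩

lemma exists_walk_induce_RSet_length_le {u v : V} (hu : u ∈ RSet G m u)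
    (hv : v ∈ RSet G m u) :
    ∃ p : (G.induce (RSet G m u)).Walk ⟨u, hu⟩ ⟨v, hv⟩, p.length ≤ m := by
  obtain ⟨p, hp, hlen, hmin⟩ := id hv
  have hsupp : ∀ x ∈ p.support, x ∈ RSet G m u :=
    fun x hx => mem_reachSet_of_mem_support hp hlen hmin hx
  refine ⟨(p.induce _ hsupp).reverse, ?_⟩
  rwa [SimpleGraph.Walk.length_reverse, SimpleGraph.Walk.length_induce]

end

theorem RSet_connected_radius_general {V : Type*} [LinearOrder V] (G : SimpleGraph V)
    (m : ℕ) (u : V) (hu : u ∈ RSet G m u) :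
    (G.induce (RSet G m u)).Connected ∧
      ∀ v, ∀ hv : v ∈ RSet G m u,
        ∃ p : (G.induce (RSet G m u)).Walk ⟨u, hu⟩ ⟨v, hv⟩, p.length ≤ m := by
  refine ⟨(SimpleGraph.connected_iff_exists_forall_reachable _).2 ⟨⟨u, hu⟩, fun ⟨v, hv⟩ => ?_⟩,
    fun _ => exists_walk_induce_RSet_length_le hu⟩
  obtain ⟨p, -⟩ := exists_walk_induce_RSet_length_le hu hv
  exact p.reachable

theorem RSet_connected_radius {V : Type*} [LinearOrder V] (G : SimpleGraph V)
    (m : ℕ) (hm : 1 ≤ m) (u : V) (hu : u ∈ RSet G m u) :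
    (G.induce (RSet G m u)).Connected ∧
      ∀ v, ∀ hv : v ∈ RSet G m u,
        ∃ p : (G.induce (RSet G m u)).Walk ⟨u, hu⟩ ⟨v, hv⟩, p.length ≤ m :=
  RSet_connected_radius_general G m u hu
end

section
/- Let H be a graph with cost assignment ρ, ρ(H) > 0, and suppose every connected component M of H satisfies ρ(M) < (3/4)ρ(H). Then the components of H can be partitioned into two parts H′ and H″ with ρ(H′) > ρ(H)/4 and ρ(H″) > ρ(H)/4. -/
/-!
If a single component costs more than `ρ(H)/4`, it is one part and the rest the other, since it
costs less than `3ρ(H)/4`. Otherwise take an inclusion-maximal family of components of total cost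
at most `ρ(H)/2`: it misses some component, adding that component pushes the total past
`ρ(H)/2`, and that component costs at most `ρ(H)/4`.
-/

open Finset

section Splitting

variable {ι : Type*} [Fintype ι] [DecidableEq ι] (w : ι → ℝ)

theorem exists_finset_quarter_lt_sum_le_half (hpos : 0 < ∑ i, w i)
    (hsmall : ∀ i, w i ≤ (∑ j, w j) / 4) :
    ∃ S : Finset ι, (∑ i, w i) / 4 < ∑ i ∈ S, w i ∧ ∑ i ∈ S, w i ≤ (∑ i, w i) / 2 := by
  obtain ⟨S, hS⟩ := (Set.toFinite {S : Finset ι | ∑ i ∈ S, w i ≤ (∑ i, w i) / 2}).exists_maximal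
    ⟨∅, by simp only [Set.mem_ofPred_eq, sum_empty]; linarith⟩
  obtain ⟨c, hc⟩ : ∃ c, c ∉ S := by
    by_contra! hall
    have := hS.prop
    rw [Set.mem_ofPred_eq, eq_univ_of_forall hall] at this
    linarith
  have hinsert : (∑ i, w i) / 2 < w c + ∑ i ∈ S, w i := by
    have := hS.not_prop_of_gt (ssubset_insert hc)
    rwa [Set.mem_ofPred_eq, sum_insert hc, not_le] at this
  exact ⟨S, by linarith [hsmall c], hS.prop⟩

theorem exists_finset_quarter_lt_sum_and_sum_compl (hpos : 0 < ∑ i, w i)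
    (hlt : ∀ i, w i < 3 / 4 * ∑ j, w j) :
    ∃ S : Finset ι, (∑ i, w i) / 4 < ∑ i ∈ S, w i ∧ (∑ i, w i) / 4 < ∑ i ∈ Sᶜ, w i := by
  obtain ⟨S, hS, hSc⟩ : ∃ S : Finset ι,
      (∑ i, w i) / 4 < ∑ i ∈ S, w i ∧ ∑ i ∈ S, w i < 3 / 4 * ∑ i, w i := by
    by_cases hbig : ∃ c, (∑ i, w i) / 4 < w c
    · obtain ⟨c, hc⟩ := hbig
      exact ⟨{c}, by simpa using hc, by simpa using hlt c⟩
    · push Not at hbig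
      obtain ⟨S, hS, hShalf⟩ := exists_finset_quarter_lt_sum_le_half w hpos hbig
      exact ⟨S, hS, by linarith⟩
  exact ⟨S, hS, by linarith [sum_compl_add_sum S w]⟩

end Splitting

theorem exists_set_quarter_lt_finsum_preimage {V ι : Type*} [Fintype V] [Finite ι] (g : V → ι)
    (ρ : V → ℝ) (hpos : 0 < ∑ v, ρ v) (hfib : ∀ i, ∑ᶠ u ∈ g ⁻¹' {i}, ρ u < 3 / 4 * ∑ v, ρ v) :
    ∃ S : Set ι, (∑ v, ρ v) / 4 < ∑ᶠ u ∈ g ⁻¹' S, ρ u ∧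
      (∑ v, ρ v) / 4 < ∑ᶠ u ∈ g ⁻¹' Sᶜ, ρ u := by
  classical
  have := Fintype.ofFinite ι
  have hpreimage (S : Finset ι) :
      ∑ᶠ u ∈ g ⁻¹' S, ρ u = ∑ i ∈ S, ∑ u with g u = i, ρ u := by
    rw [sum_fiberwise_eq_sum_filter univ S g ρ, ← finsum_mem_coe_finset, coe_filter]
    simp
  have htotal : ∑ i, ∑ u with g u = i, ρ u = ∑ v, ρ v := sum_fiberwise univ g ρ
  obtain ⟨S, hS, hSc⟩ := exists_finset_quarter_lt_sum_and_sum_compl (fun i => ∑ u with g u = i, ρ u)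
    (htotal ▸ hpos) fun i => by
      simpa only [← coe_singleton, hpreimage, sum_singleton, htotal] using hfib i
  refine ⟨S, ?_, ?_⟩
  · rwa [hpreimage, ← htotal]
  · rwa [← coe_compl, hpreimage, ← htotal]

theorem components_split_general {V : Type*} [Fintype V] (H : SimpleGraph V) (ρ : V → ℝ)
    (hpos : 0 < ∑ v, ρ v)
    (hcomp : ∀ v, (∑ᶠ u ∈ {u | H.Reachable v u}, ρ u) < 3 / 4 * ∑ v, ρ v) :
    ∃ A B : Set V, A ∪ B = Set.univ ∧ A ∩ B = ∅ ∧
      (∀ u v, H.Reachable u v → (u ∈ A ↔ v ∈ A)) ∧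
      (∑ v, ρ v) / 4 < (∑ᶠ u ∈ A, ρ u) ∧ (∑ v, ρ v) / 4 < (∑ᶠ u ∈ B, ρ u) := by
  have hfiber (v : V) : H.connectedComponentMk ⁻¹' {H.connectedComponentMk v} =
      {u | H.Reachable v u} := by
    ext u
    simpa using ⟨SimpleGraph.Reachable.symm, SimpleGraph.Reachable.symm⟩
  obtain ⟨S, hS, hSc⟩ := exists_set_quarter_lt_finsum_preimage H.connectedComponentMk ρ hpos
    fun c => c.ind fun v => hfiber v ▸ hcomp v
  rw [Set.preimage_compl] at hSc
  exact ⟨_, _, Set.union_compl_self _, Set.inter_compl_self _,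
    fun u v huv => by simp [SimpleGraph.ConnectedComponent.sound huv], hS, hSc⟩

/-- If every connected component of `H` has cost less than `3/4` of the total cost,
then the components can be split into two groups, each of total cost more than a
quarter of the whole. -/
theorem components_split {V : Type*} [Fintype V] (H : SimpleGraph V) (ρ : V → ℝ)
    (hρ : ∀ v, 0 ≤ ρ v) (hpos : 0 < ∑ v, ρ v)
    (hcomp : ∀ v, (∑ᶠ u ∈ {u | H.Reachable v u}, ρ u) < 3 / 4 * ∑ v, ρ v) :
    ∃ A B : Set V, A ∪ B = Set.univ ∧ A ∩ B = ∅ ∧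
      (∀ u v, H.Reachable u v → (u ∈ A ↔ v ∈ A)) ∧
      (∑ v, ρ v) / 4 < (∑ᶠ u ∈ A, ρ u) ∧ (∑ v, ρ v) / 4 < (∑ᶠ u ∈ B, ρ u) :=
  components_split_general H ρ hpos hcomp
end
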